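/- arXiv:2111.03273 — 2 statements merged into one kernel-verified Lean document; each statement's English description precedes it below -/
import Mathlib

section
/- Let d ≥ 2 and let e ∈ ℂ^d be a fixed unit vector. The pushforward of the uniform probability measure μ_d on the unit sphere of ℂ^d under the map u ↦ |⟨e,u⟩|² equals the measure on ℝ with density x ↦ (d-1)(1-x)^{d-2}·1_{[0,1]}(x) with respect to Lebesgue measure. -/
/-!
Integrating the indicator of `{(u, z) | a ‖z‖² < ‖⟪u, z⟫‖²}` over (sphere × unit ball) in both
orders gives `μ {u | a < ‖⟪e, u⟫‖²} · vol B = vol {z ∈ B | a ‖z‖² < ‖⟪e, z⟫‖²}`: the slice at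
`z ≠ 0` is a cap around `z / ‖z‖`, whose measure does not depend on the direction because unitaries
act transitively on the sphere and preserve `μ`. In the real orthogonal splitting
`ℂ^d = ℂe ⊕ (ℂe)ᗮ ≅ ℝ² × ℝ^(2d-2)` the slices of the cone are planar annuli of area
`π (1 - ‖y‖² / (1 - a))`, so rescaling `y` by `√(1 - a)` shows that the cone has volume
`(1 - a)^(d-1) vol B`. Hence `μ {u | a < ‖⟪e, u⟫‖²} = (1 - a)^(d-1)`, the tail of the stated
density.
-/

open MeasureTheory

noncomputable section

/-- `ℂ^d`. -/
abbrev Cvec (d : ℕ) : Type := EuclideanSpace ℂ (Fin d)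

instance (d : ℕ) : MeasurableSpace (Cvec d) := borel _
instance (d : ℕ) : BorelSpace (Cvec d) := ⟨rfl⟩

/-- The unit sphere of `ℂ^d`. -/
abbrev USphere (d : ℕ) := Metric.sphere (0 : Cvec d) 1

/-- The action of a unitary (linear isometric equivalence) on the unit sphere. -/
def sphereRot (d : ℕ) (e : Cvec d ≃ₗᵢ[ℂ] Cvec d) (x : USphere d) : USphere d :=
  ⟨e x, by
    have hx : ‖(x : Cvec d)‖ = 1 := mem_sphere_zero_iff_norm.mp x.2
    simp [mem_sphere_zero_iff_norm, e.norm_map, hx]⟩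

/-- `μ` is the uniform (rotation-invariant) probability measure on the unit sphere of `ℂ^d`. -/
def IsUniformOnSphere (d : ℕ) (μ : Measure (USphere d)) : Prop :=
  IsProbabilityMeasure μ ∧
    ∀ e : Cvec d ≃ₗᵢ[ℂ] Cvec d, μ.map (sphereRot d e) = μ

open Metric Module
open scoped ENNReal

section AddHaar

variable {E : Type*} [NormedAddCommGroup E] [NormedSpace ℝ E] [MeasurableSpace E] [BorelSpace E]
  [FiniteDimensional ℝ E] (μ : Measure E) [μ.IsAddHaarMeasure]

theorem MeasureTheory.Measure.lintegral_comp_smul (f : E → ℝ≥0∞) {r : ℝ} (hr : r ≠ 0) :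
    ∫⁻ x, f (r • x) ∂μ = ENNReal.ofReal |(r ^ finrank ℝ E)⁻¹| * ∫⁻ x, f x ∂μ := by
  rw [← smul_eq_mul, ← lintegral_smul_measure, ← map_addHaar_smul μ hr]
  exact (lintegral_map_equiv f (Homeomorph.smulOfNeZero r hr).toMeasurableEquiv).symm

theorem MeasureTheory.Measure.addHaar_setOf_lt_sq_norm_lt (hE : finrank ℝ E = 2) {r s : ℝ}
    (hr : 0 ≤ r) :
    μ {x | r < ‖x‖ ^ 2 ∧ ‖x‖ ^ 2 < s} = ENNReal.ofReal (s - r) * μ (ball 0 1) := by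
  rcases le_or_gt s r with hsr | hrs
  · have hempty : {x : E | r < ‖x‖ ^ 2 ∧ ‖x‖ ^ 2 < s} = ∅ :=
      Set.eq_empty_of_forall_notMem fun x hx => (hx.1.trans hx.2).not_ge hsr
    simp [hempty, ENNReal.ofReal_of_nonpos (sub_nonpos.2 hsr)]
  have : Nontrivial E := nontrivial_of_finrank_eq_succ hE
  have hset : {x : E | r < ‖x‖ ^ 2 ∧ ‖x‖ ^ 2 < s} = ball 0 √s \ closedBall 0 √r := by
    ext x
    simp [Real.lt_sqrt (norm_nonneg x), Real.sqrt_lt hr (norm_nonneg x), and_comm]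
  rw [hset, measure_sdiff (closedBall_subset_ball (Real.sqrt_lt_sqrt hr hrs))
      measurableSet_closedBall.nullMeasurableSet measure_closedBall_lt_top.ne,
    Measure.addHaar_ball μ _ (Real.sqrt_nonneg s),
    Measure.addHaar_closedBall μ _ (Real.sqrt_nonneg r), hE, Real.sq_sqrt (hr.trans hrs.le), Real.sq_sqrt hr,
    ← ENNReal.sub_mul fun _ _ => measure_ball_lt_top.ne, ENNReal.ofReal_sub _ hr]

end AddHaar

section Cone

variable {V : Type*} [NormedAddCommGroup V] [InnerProductSpace ℝ V] [FiniteDimensional ℝ V]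
  [MeasurableSpace V] [BorelSpace V] (L : Submodule ℝ V)

theorem volume_setOf_lt_sq_norm_starProjection_eq_mul (hL : finrank ℝ L = 2) {a : ℝ}
    (ha0 : 0 ≤ a) (ha1 : a < 1) :
    volume {z : V | ‖z‖ < 1 ∧ a * ‖z‖ ^ 2 < ‖L.starProjection z‖ ^ 2}
      = ENNReal.ofReal (√(1 - a) ^ finrank ℝ Lᗮ) *
        ((∫⁻ y : Lᗮ, ENNReal.ofReal (1 - ‖y‖ ^ 2)) * volume (ball (0 : L) 1)) := by
  set S : Set (L × Lᗮ) :=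
    {q | ‖q.1‖ ^ 2 + ‖q.2‖ ^ 2 < 1 ∧ a * (‖q.1‖ ^ 2 + ‖q.2‖ ^ 2) < ‖q.1‖ ^ 2}
  have hS : MeasurableSet S := by
    simp only [S, Set.ofPred_and]
    exact (measurableSet_lt (by fun_prop) measurable_const).inter
      (measurableSet_lt (by fun_prop) (by fun_prop))
  have hdecomp : MeasurePreserving (WithLp.ofLp ∘ L.orthogonalDecomposition) :=
    (WithLp.volume_preserving_ofLp L Lᗮ).comp L.orthogonalDecomposition.measurePreserving
  have hpre : {z : V | ‖z‖ < 1 ∧ a * ‖z‖ ^ 2 < ‖L.starProjection z‖ ^ 2}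
      = WithLp.ofLp ∘ L.orthogonalDecomposition ⁻¹' S := by
    ext z
    have hz : ‖z‖ < 1 ↔ ‖z‖ ^ 2 < 1 := (pow_lt_one_iff_of_nonneg (norm_nonneg z) two_ne_zero).symm
    simp [S, hz, L.norm_sq_eq_add_norm_sq_starProjection z]
  have h1a : 0 < 1 - a := sub_pos.2 ha1
  have hsection (y : Lᗮ) : volume ((·, y) ⁻¹' S)
      = ENNReal.ofReal (1 - ‖y‖ ^ 2 / (1 - a)) * volume (ball (0 : L) 1) := by
    have : (·, y) ⁻¹' S = {x : L | a * ‖y‖ ^ 2 / (1 - a) < ‖x‖ ^ 2 ∧ ‖x‖ ^ 2 < 1 - ‖y‖ ^ 2} := by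
      ext x
      simp only [S, Set.mem_preimage, Set.mem_ofPred_eq, div_lt_iff₀ h1a]
      constructor <;> rintro ⟨h1, h2⟩ <;> constructor <;> linarith
    rw [this, Measure.addHaar_setOf_lt_sq_norm_lt _ hL (by positivity)]
    congr 2
    field_simp
    ring
  have hr : √(1 - a) ≠ 0 := (Real.sqrt_pos.2 h1a).ne'
  have hscale : ∫⁻ y : Lᗮ, ENNReal.ofReal (1 - ‖y‖ ^ 2 / (1 - a))
      = ENNReal.ofReal (√(1 - a) ^ finrank ℝ Lᗮ) * ∫⁻ y : Lᗮ, ENNReal.ofReal (1 - ‖y‖ ^ 2) := by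
    have := Measure.lintegral_comp_smul volume (fun y : Lᗮ => ENNReal.ofReal (1 - ‖y‖ ^ 2))
      (inv_ne_zero hr)
    simpa [norm_smul, mul_pow, Real.sq_sqrt h1a.le, div_eq_inv_mul,
      abs_of_pos (Real.sqrt_pos.2 h1a)] using this
  rw [hpre, hdecomp.measure_preimage hS.nullMeasurableSet, Measure.volume_eq_prod,
    Measure.prod_apply_symm hS, lintegral_congr hsection,
    lintegral_mul_const' _ _ measure_ball_lt_top.ne, hscale, mul_assoc]

theorem volume_setOf_lt_sq_norm_starProjection (hL : finrank ℝ L = 2) {a : ℝ}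
    (ha0 : 0 ≤ a) (ha1 : a < 1) :
    volume {z : V | ‖z‖ < 1 ∧ a * ‖z‖ ^ 2 < ‖L.starProjection z‖ ^ 2}
      = ENNReal.ofReal (√(1 - a) ^ (finrank ℝ V - 2)) * volume (ball (0 : V) 1) := by
  have hL' : L ≠ ⊥ := by rintro rfl; simp at hL
  have hcone0 : {z : V | ‖z‖ < 1 ∧ 0 * ‖z‖ ^ 2 < ‖L.starProjection z‖ ^ 2}
      = ball 0 1 \ (Lᗮ : Set V) := by
    ext z
    simp [sq_pos_iff, Submodule.starProjection_apply_eq_zero_iff]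
  have hnull : volume (Lᗮ : Set V) = 0 :=
    Measure.addHaar_submodule _ _ (mt (Submodule.orthogonal_eq_top_iff L).1 hL')
  have h0 := volume_setOf_lt_sq_norm_starProjection_eq_mul L hL le_rfl one_pos
  rw [hcone0, measure_sdiff_null hnull, sub_zero, Real.sqrt_one, one_pow, ENNReal.ofReal_one,
    one_mul] at h0
  rw [volume_setOf_lt_sq_norm_starProjection_eq_mul L hL ha0 ha1, ← h0,
    ← Submodule.finrank_add_finrank_orthogonal L, hL, Nat.add_sub_cancel_left]

end Cone

section Transitivity

variable {𝕜 E : Type*} [RCLike 𝕜] [NormedAddCommGroup E] [InnerProductSpace 𝕜 E]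
  [FiniteDimensional 𝕜 E]

theorem exists_orthonormalBasis_apply_eq {ι : Type*} [Fintype ι] (hι : finrank 𝕜 E = Fintype.card ι)
    (i : ι) {v : E} (hv : ‖v‖ = 1) : ∃ b : OrthonormalBasis ι 𝕜 E, b i = v := by
  have hv' : Orthonormal 𝕜 (({i} : Set ι).domRestrict fun _ => v) :=
    ⟨fun _ => hv, fun j k hjk => (hjk (Subsingleton.elim j k)).elim⟩
  obtain ⟨b, hb⟩ := hv'.exists_orthonormalBasis_extension_of_card_eq hι
  exact ⟨b, hb i rfl⟩

theorem exists_linearIsometryEquiv_apply_eq {v w : E} (hv : ‖v‖ = 1) (hw : ‖w‖ = 1) :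
    ∃ g : E ≃ₗᵢ[𝕜] E, g v = w := by
  have : Nontrivial E := ⟨v, 0, by rintro rfl; simp at hv⟩
  have hι : finrank 𝕜 E = Fintype.card (Fin (finrank 𝕜 E)) := (Fintype.card_fin _).symm
  let i : Fin (finrank 𝕜 E) := ⟨0, finrank_pos⟩
  obtain ⟨b, hb⟩ := exists_orthonormalBasis_apply_eq hι i hv
  obtain ⟨c, hc⟩ := exists_orthonormalBasis_apply_eq hι i hw
  refine ⟨b.repr.trans c.repr.symm, ?_⟩
  simp [← hb, ← hc]

end Transitivity

theorem finrank_restrictScalars_span_singleton {F K M : Type*} [Field F] [Field K] [Algebra F K]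
    [AddCommGroup M] [Module K M] [Module F M] [IsScalarTower F K M] {e : M} (he : e ≠ 0) :
    finrank F ((K ∙ e).restrictScalars F) = finrank F K := by
  change finrank F (K ∙ e) = finrank F K
  rw [← Module.finrank_mul_finrank F K, finrank_span_singleton he, mul_one]

section EuclideanSpaceComplex

variable {ι : Type*} [Fintype ι]

theorem EuclideanSpace.real_inner_eq_re_inner (x y : EuclideanSpace ℂ ι) :
    inner ℝ x y = (inner ℂ x y).re := by
  simp [PiLp.inner_apply, Complex.re_sum]

theorem EuclideanSpace.finrank_real_complex :
    finrank ℝ (EuclideanSpace ℂ ι) = 2 * Fintype.card ι := by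
  rw [← Module.finrank_mul_finrank ℝ ℂ, Complex.finrank_real_complex, finrank_euclideanSpace]

theorem Submodule.starProjection_restrictScalars (K : Submodule ℂ (EuclideanSpace ℂ ι))
    (z : EuclideanSpace ℂ ι) : (K.restrictScalars ℝ).starProjection z = K.starProjection z := by
  refine Submodule.eq_starProjection_of_mem_of_inner_eq_zero (K.starProjection_apply_mem z)
    fun w hw => ?_
  rw [EuclideanSpace.real_inner_eq_re_inner,
    Submodule.inner_left_of_mem_orthogonal (show w ∈ K from hw)
      (K.sub_starProjection_mem_orthogonal z),
    Complex.zero_re]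

end EuclideanSpaceComplex

theorem volume_setOf_lt_sq_norm_inner {d : ℕ} {e : Cvec d} (he : ‖e‖ = 1) {a : ℝ}
    (ha0 : 0 ≤ a) (ha1 : a < 1) :
    volume {z : Cvec d | ‖z‖ < 1 ∧ a * ‖z‖ ^ 2 < ‖inner ℂ e z‖ ^ 2}
      = ENNReal.ofReal ((1 - a) ^ (d - 1)) * volume (ball (0 : Cvec d) 1) := by
  have hproj (z : Cvec d) :
      ‖((ℂ ∙ e).restrictScalars ℝ).starProjection z‖ = ‖inner ℂ e z‖ := by
    rw [Submodule.starProjection_restrictScalars, Submodule.starProjection_unit_singleton ℂ he,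
      norm_smul, he, mul_one]
  have hL : finrank ℝ ((ℂ ∙ e).restrictScalars ℝ) = 2 := by
    rw [finrank_restrictScalars_span_singleton (norm_ne_zero_iff.1 (he.symm ▸ one_ne_zero)),
      Complex.finrank_real_complex]
  simp_rw [← hproj]
  rw [volume_setOf_lt_sq_norm_starProjection _ hL ha0 ha1, EuclideanSpace.finrank_real_complex,
    ← Nat.mul_sub_one, pow_mul, Real.sq_sqrt (sub_nonneg.2 ha1.le), Fintype.card_fin]

section Sphere

variable {d : ℕ} {μ : Measure (USphere d)}

theorem continuous_sphereRot (g : Cvec d ≃ₗᵢ[ℂ] Cvec d) : Continuous (sphereRot d g) :=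
  (g.continuous.comp continuous_subtype_val).subtype_mk _

theorem measure_setOf_lt_sq_norm_inner_eq
    (hinv : ∀ g : Cvec d ≃ₗᵢ[ℂ] Cvec d, μ.map (sphereRot d g) = μ) {v w : Cvec d}
    (hv : ‖v‖ = 1) (hw : ‖w‖ = 1) (a : ℝ) :
    μ {u : USphere d | a < ‖inner ℂ w (u : Cvec d)‖ ^ 2}
      = μ {u : USphere d | a < ‖inner ℂ v (u : Cvec d)‖ ^ 2} := by
  obtain ⟨g, rfl⟩ := exists_linearIsometryEquiv_apply_eq (𝕜 := ℂ) hv hw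
  conv_lhs => rw [← hinv g]
  rw [Measure.map_apply (continuous_sphereRot g).measurable
    (measurableSet_lt measurable_const (by fun_prop))]
  simp [sphereRot, Set.preimage, LinearIsometryEquiv.inner_map_map]

theorem measure_setOf_lt_sq_norm_inner_mul_volume_ball (hμ : IsUniformOnSphere d μ)
    {e : Cvec d} (he : ‖e‖ = 1) {a : ℝ} (ha0 : 0 ≤ a) (ha1 : a < 1) :
    μ {u : USphere d | a < ‖inner ℂ e (u : Cvec d)‖ ^ 2} * volume (ball (0 : Cvec d) 1)
      = ENNReal.ofReal ((1 - a) ^ (d - 1)) * volume (ball (0 : Cvec d) 1) := by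
  obtain ⟨_, hinv⟩ := hμ
  have : Nontrivial (Cvec d) := ⟨e, 0, by rintro rfl; simp at he⟩
  set s : Set (USphere d × Cvec d) :=
    {p | ‖p.2‖ < 1 ∧ a * ‖p.2‖ ^ 2 < ‖inner ℂ (p.1 : Cvec d) p.2‖ ^ 2}
  have hs : MeasurableSet s := by
    simp only [s, Set.ofPred_and]
    exact (measurableSet_lt (by fun_prop) measurable_const).inter
      (measurableSet_lt (by fun_prop) (by fun_prop))
  have hsection_sphere (u : USphere d) : volume (Prod.mk u ⁻¹' s)
      = ENNReal.ofReal ((1 - a) ^ (d - 1)) * volume (ball (0 : Cvec d) 1) :=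
    volume_setOf_lt_sq_norm_inner (norm_eq_of_mem_sphere u) ha0 ha1
  have hsection_ball (z : Cvec d) (hz : z ≠ 0) : μ ((·, z) ⁻¹' s)
      = (ball 0 1).indicator (fun _ => μ {u : USphere d | a < ‖inner ℂ e (u : Cvec d)‖ ^ 2}) z := by
    by_cases hz1 : ‖z‖ < 1
    · rw [Set.indicator_of_mem (mem_ball_zero_iff.2 hz1),
        ← measure_setOf_lt_sq_norm_inner_eq hinv he (norm_smul_inv_norm (𝕜 := ℂ) hz) a]
      congr 1
      ext u
      have hz' : 0 < ‖z‖ ^ 2 := by positivity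
      simp [s, hz1, norm_inner_symm (u : Cvec d) z, mul_pow, inv_pow, lt_mul_inv_iff₀ hz']
    · rw [Set.indicator_of_notMem (by simpa using hz1)]
      simp [s, hz1]
  have hae : ∀ᵐ z ∂(volume : Measure (Cvec d)), z ≠ 0 :=
    compl_mem_ae_iff.2 (measure_singleton 0)
  calc μ {u : USphere d | a < ‖inner ℂ e (u : Cvec d)‖ ^ 2} * volume (ball (0 : Cvec d) 1)
      = ∫⁻ z, μ ((·, z) ⁻¹' s) := by
        rw [lintegral_congr_ae (hae.mono hsection_ball), lintegral_indicator measurableSet_ball,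
          setLIntegral_const, mul_comm]
    _ = ∫⁻ u, volume (Prod.mk u ⁻¹' s) ∂μ := by
        rw [← Measure.prod_apply_symm hs, Measure.prod_apply hs]
    _ = ENNReal.ofReal ((1 - a) ^ (d - 1)) * volume (ball (0 : Cvec d) 1) := by
        rw [lintegral_congr hsection_sphere, lintegral_const, measure_univ, mul_one]

theorem measure_setOf_lt_sq_norm_inner (hμ : IsUniformOnSphere d μ) {e : Cvec d} (he : ‖e‖ = 1)
    {a : ℝ} (ha0 : 0 ≤ a) (ha1 : a < 1) :
    μ {u : USphere d | a < ‖inner ℂ e (u : Cvec d)‖ ^ 2} = ENNReal.ofReal ((1 - a) ^ (d - 1)) := by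
  have : Nontrivial (Cvec d) := ⟨e, 0, by rintro rfl; simp at he⟩
  exact (ENNReal.mul_left_inj (measure_ball_pos volume 0 one_pos).ne' measure_ball_lt_top.ne).1
    (measure_setOf_lt_sq_norm_inner_mul_volume_ball hμ he ha0 ha1)

theorem norm_inner_le_one {e : Cvec d} (he : ‖e‖ = 1) (u : USphere d) :
    ‖inner ℂ e (u : Cvec d)‖ ≤ 1 :=
  (norm_inner_le_norm e (u : Cvec d)).trans_eq <| by rw [he, norm_eq_of_mem_sphere u, one_mul]

theorem measure_setOf_sq_norm_inner_le (hd : 2 ≤ d) (hμ : IsUniformOnSphere d μ) {e : Cvec d}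
    (he : ‖e‖ = 1) {t : ℝ} (ht0 : 0 ≤ t) (ht1 : t ≤ 1) :
    μ {u : USphere d | ‖inner ℂ e (u : Cvec d)‖ ^ 2 ≤ t}
      = ENNReal.ofReal (1 - (1 - t) ^ (d - 1)) := by
  have : IsProbabilityMeasure μ := hμ.1
  rcases ht1.lt_or_eq with ht1 | rfl
  · have hcompl : {u : USphere d | ‖inner ℂ e (u : Cvec d)‖ ^ 2 ≤ t}
        = {u : USphere d | t < ‖inner ℂ e (u : Cvec d)‖ ^ 2}ᶜ := by
      ext; simp
    rw [hcompl,
      measure_compl (measurableSet_lt measurable_const (by fun_prop)) (measure_ne_top _ _),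
      measure_univ, measure_setOf_lt_sq_norm_inner hμ he ht0 ht1, ← ENNReal.ofReal_one,
      ← ENNReal.ofReal_sub _ (pow_nonneg (sub_nonneg.2 ht1.le) _)]
  · have : {u : USphere d | ‖inner ℂ e (u : Cvec d)‖ ^ 2 ≤ 1} = Set.univ := by
      ext u; simp [norm_inner_le_one he u]
    rw [this, measure_univ]
    simp [zero_pow (by omega : d - 1 ≠ 0)]

end Sphere

theorem lintegral_Icc_ofReal_succ_mul_one_sub_pow (n : ℕ) {t : ℝ} (ht0 : 0 ≤ t) (ht1 : t ≤ 1) :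
    ∫⁻ x in Set.Icc (0 : ℝ) t, ENNReal.ofReal ((n + 1) * (1 - x) ^ n)
      = ENNReal.ofReal (1 - (1 - t) ^ (n + 1)) := by
  have hnonneg : ∀ᵐ x : ℝ ∂volume.restrict (Set.Icc (0 : ℝ) t), 0 ≤ (n + 1) * (1 - x) ^ n :=
    (ae_restrict_iff' measurableSet_Icc).2 <| .of_forall fun x hx =>
      mul_nonneg (by positivity) (pow_nonneg (by linarith [hx.2]) n)
  rw [← ofReal_integral_eq_lintegral_ofReal (Continuous.integrableOn_Icc (by fun_prop)) hnonneg,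
    integral_Icc_eq_integral_Ioc,
    ← intervalIntegral.integral_of_le ht0, intervalIntegral.integral_const_mul,
    intervalIntegral.integral_comp_sub_left (fun x => x ^ n), integral_pow]
  congr 1
  field_simp
  ring

theorem withDensity_ofReal_indicator_Icc_apply_Iic (g : ℝ → ℝ) (a b t : ℝ) :
    volume.withDensity (fun x => ENNReal.ofReal ((Set.Icc a b).indicator g x)) (Set.Iic t)
      = ∫⁻ x in Set.Icc a (min t b), ENNReal.ofReal (g x) := by
  have hind : (fun x => ENNReal.ofReal ((Set.Icc a b).indicator g x))
      = (Set.Icc a b).indicator fun x => ENNReal.ofReal (g x) :=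
    (Set.indicator_comp_of_zero ENNReal.ofReal_zero).symm
  have hIcc : Set.Icc a b ∩ Set.Iic t = Set.Icc a (min t b) := by
    ext x
    simp only [Set.mem_inter_iff, Set.mem_Icc, Set.mem_Iic, le_min_iff]
    tauto
  rw [withDensity_apply _ measurableSet_Iic, hind, lintegral_indicator measurableSet_Icc,
    Measure.restrict_restrict measurableSet_Icc, hIcc]

/-- The pushforward of the uniform measure on the unit sphere of `ℂ^d`
under `u ↦ |⟨e,u⟩|²` has density `(d-1)(1-x)^{d-2}·1_{[0,1]}(x)` w.r.t. Lebesgue measure. -/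
theorem stmt2 (d : ℕ) (hd : 2 ≤ d)
    (μ : Measure (USphere d)) (hμ : IsUniformOnSphere d μ)
    (e : Cvec d) (he : ‖e‖ = 1) :
    μ.map (fun u : USphere d => ‖(inner ℂ e (u : Cvec d) : ℂ)‖ ^ 2)
      = volume.withDensity (fun x : ℝ =>
          ENNReal.ofReal (Set.indicator (Set.Icc (0 : ℝ) 1)
            (fun x => ((d : ℝ) - 1) * (1 - x) ^ (d - 2)) x)) := by
  have : IsProbabilityMeasure μ := hμ.1
  have hcoef : (d : ℝ) - 1 = ((d - 2 : ℕ) : ℝ) + 1 := by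
    rw [Nat.cast_sub hd]
    push_cast
    ring
  have hpow : d - 1 = d - 2 + 1 := by omega
  refine Measure.ext_of_Iic _ _ fun t => ?_
  have hpre : (fun u : USphere d => ‖inner ℂ e (u : Cvec d)‖ ^ 2) ⁻¹' Set.Iic t
      = {u : USphere d | ‖inner ℂ e (u : Cvec d)‖ ^ 2 ≤ min t 1} := by
    ext u
    simp [norm_inner_le_one he u]
  rw [Measure.map_apply (by fun_prop) measurableSet_Iic, hpre,
    withDensity_ofReal_indicator_Icc_apply_Iic]
  rcases lt_or_ge (min t 1) 0 with hneg | hnonneg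
  · have : {u : USphere d | ‖inner ℂ e (u : Cvec d)‖ ^ 2 ≤ min t 1} = ∅ :=
      Set.eq_empty_of_forall_notMem fun u hu => (hneg.trans_le (by positivity)).not_ge hu
    rw [this, Set.Icc_eq_empty_of_lt hneg]
    simp
  · rw [measure_setOf_sq_norm_inner_le hd hμ he hnonneg (min_le_right _ _), hcoef, hpow,
      lintegral_Icc_ofReal_succ_mul_one_sub_pow _ hnonneg (min_le_right _ _)]
end
end

section
/- Let d ≥ 1, k ≥ 1, let φ, ψ ∈ ℂ^d be unit vectors, let f = |⟨φ,ψ⟩|², and let C = C(d+k-1, k). Then C² · ∬ |⟨u,v⟩|² · |⟨φ,u⟩|^{2k} · |⟨ψ,v⟩|^{2k} dμ_d(u) dμ_d(v) = (d+2k)/(d+k)² + (k²/(d+k)²)·f. In other words, the estimator w = ((d+k)²·|⟨u,v⟩|² − (d+2k))/k², where u and v are independently drawn from the measures with densities C·|⟨φ,u⟩|^{2k} and C·|⟨ψ,v⟩|^{2k} with respect to μ_d, is an unbiased estimator of f. -/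
open MeasureTheory

noncomputable section

/-! Write `M n = ∫ |⟨a,u⟩|^{2n} dμ(u)`; by rotation invariance it is the same for every unit
vector `a`. Invariance under the unitary that multiplies the `a`-component by a phase kills
every integral of `⟨a,u⟩^p conj ⟨a,u⟩^q h(⟨b,u⟩)` with `p ≠ q` and `b ⊥ a`. Expanding
`M n` for the vector `t a + b` (orthonormal `a, b`, norm `√(1 + t²)`) therefore gives the
polynomial identity `∑ C(n,j)² t^{2j} ∫ |⟨a,u⟩|^{2j} |⟨b,u⟩|^{2(n-j)} = (1 + t²)^n M n`, whence
`C(n,j) ∫ |⟨a,u⟩|^{2j} |⟨b,u⟩|^{2(n-j)} = M n`. Splitting a general unit `b` along `a` yields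
`(k+1) ∫ |⟨b,u⟩|² |⟨a,u⟩|^{2k} = M (k+1) (1 + k |⟨a,b⟩|²)`; summing this over an orthonormal
basis gives `(n+1) M n = (d+n) M (n+1)`, so `M n = C(d+n-1,n)⁻¹`. The double integral is
computed by applying the formula first in `v`, then in `u`. -/

open scoped InnerProductSpace ComplexConjugate

lemma Continuous.integrable_of_compactSpace {X E : Type*} [TopologicalSpace X] [CompactSpace X]
    [MeasurableSpace X] [OpensMeasurableSpace X] {μ : Measure X} [IsFiniteMeasure μ]
    [NormedAddCommGroup E] {g : X → E} (hg : Continuous g) : Integrable g μ :=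
  hg.integrable_of_hasCompactSupport (.of_compactSpace g)

lemma eq_mul_choose_of_sum_mul_pow_eq {c : ℕ → ℝ} {m : ℝ} {n : ℕ}
    (h : ∀ x : ℝ, 0 ≤ x → ∑ i ∈ Finset.range (n + 1), c i * x ^ i = m * (x + 1) ^ n) {j : ℕ}
    (hj : j ≤ n) : c j = m * n.choose j := by
  open Polynomial in
  have hP : ∑ i ∈ Finset.range (n + 1), C (c i) * X ^ i = C m * (X + 1) ^ n :=
    eq_of_infinite_eval_eq _ _ <| (Set.Ici_infinite 0).mono fun x hx ↦ by
      simpa [eval_finsetSum] using h x hx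
  simpa [finsetSum_coeff, coeff_X_pow, coeff_X_add_one_pow, Nat.lt_succ_of_le hj] using
    congrArg (coeff · j) hP

lemma exists_norm_eq_one_pow_mul_conj_pow_eq_neg_one {p q : ℕ} (hpq : p ≠ q) :
    ∃ z : ℂ, ‖z‖ = 1 ∧ z ^ p * conj z ^ q = -1 := by
  refine ⟨Complex.exp ((Real.pi / ((p : ℝ) - q) : ℝ) * Complex.I),
    Complex.norm_exp_ofReal_mul_I _, ?_⟩
  have hpq' : (p : ℝ) - q ≠ 0 := sub_ne_zero.mpr (Nat.cast_injective.ne hpq)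
  rw [← Complex.exp_conj, ← Complex.exp_nat_mul, ← Complex.exp_nat_mul, ← Complex.exp_add,
    ← Complex.exp_pi_mul_I, map_mul, Complex.conj_ofReal, Complex.conj_I]
  congr 1
  have : ((p : ℂ) - q) * ((Real.pi / ((p : ℝ) - q) : ℝ) : ℂ) = Real.pi := by
    rw [← Complex.ofReal_natCast, ← Complex.ofReal_natCast, ← Complex.ofReal_sub,
      ← Complex.ofReal_mul, mul_div_cancel₀ _ hpq']
  linear_combination Complex.I * this

lemma Complex.ofReal_norm_pow_two_mul (x : ℂ) (n : ℕ) :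
    ((‖x‖ ^ (2 * n) : ℝ) : ℂ) = (x * conj x) ^ n := by
  rw [Complex.mul_conj', pow_mul]
  push_cast
  ring

lemma Complex.ofReal_norm_mul_add_pow_two_mul (t : ℝ) (x y : ℂ) (n : ℕ) :
    ((‖t * x + y‖ ^ (2 * n) : ℝ) : ℂ) = ∑ p ∈ Finset.range (n + 1), ∑ q ∈ Finset.range (n + 1),
      ((t : ℂ) ^ (p + q) * n.choose p * n.choose q) *
        (x ^ p * conj x ^ q * (y ^ (n - p) * conj y ^ (n - q))) := by
  rw [Complex.ofReal_norm_pow_two_mul, mul_pow, map_add, map_mul, Complex.conj_ofReal, add_pow,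
    add_pow, Finset.sum_mul_sum]
  refine Finset.sum_congr rfl fun p _ ↦ Finset.sum_congr rfl fun q _ ↦ ?_
  ring

lemma Complex.ofReal_norm_mul_add_sq_mul_norm_pow (c x y : ℂ) (k : ℕ) :
    ((‖c * x + y‖ ^ 2 * ‖x‖ ^ (2 * k) : ℝ) : ℂ)
      = ((‖c‖ ^ 2 * ‖x‖ ^ (2 * (k + 1)) + ‖y‖ ^ 2 * ‖x‖ ^ (2 * k) : ℝ) : ℂ)
        + (c * (x ^ (k + 1) * conj x ^ k * conj y) + conj c * (x ^ k * conj x ^ (k + 1) * y)) := by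
  have h (z : ℂ) : (‖z‖ : ℂ) ^ 2 = z * conj z := (Complex.mul_conj' z).symm
  push_cast
  simp only [pow_mul, h, map_add, map_mul]
  ring

section Unitary

variable {E : Type*} [NormedAddCommGroup E] [InnerProductSpace ℂ E]

def phaseMap (a : E) (z : ℂ) : E →ₗ[ℂ] E where
  toFun u := u + ((z - 1) * ⟪a, u⟫_ℂ) • a
  map_add' u v := by simp only [inner_add_right]; module
  map_smul' c u := by simp only [inner_smul_right, RingHom.id_apply]; module

lemma exists_norm_eq_one_smul_eq {x : E} (hx : x ≠ 0) : ∃ y : E, ‖y‖ = 1 ∧ x = (‖x‖ : ℂ) • y :=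
  ⟨(‖x‖ : ℂ)⁻¹ • x, norm_smul_inv_norm hx, by
    rw [smul_smul, mul_inv_cancel₀ (by exact_mod_cast norm_ne_zero_iff.mpr hx), one_smul]⟩

variable {a : E}

lemma phaseMap_apply (z : ℂ) (u : E) : phaseMap a z u = u + ((z - 1) * ⟪a, u⟫_ℂ) • a := rfl

lemma inner_phaseMap_right_self (ha : ‖a‖ = 1) (z : ℂ) (u : E) :
    ⟪a, phaseMap a z u⟫_ℂ = z * ⟪a, u⟫_ℂ := by
  rw [phaseMap_apply, inner_add_right, inner_smul_right, inner_self_eq_norm_sq_to_K, ha]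
  push_cast
  ring

lemma inner_phaseMap_right_of_inner_eq_zero {b : E} (hba : ⟪b, a⟫_ℂ = 0) (z : ℂ) (u : E) :
    ⟪b, phaseMap a z u⟫_ℂ = ⟪b, u⟫_ℂ := by
  rw [phaseMap_apply, inner_add_right, inner_smul_right, hba, mul_zero, add_zero]

lemma inner_phaseMap_phaseMap (ha : ‖a‖ = 1) {z : ℂ} (hz : ‖z‖ = 1) (u v : E) :
    ⟪phaseMap a z u, phaseMap a z v⟫_ℂ = ⟪u, v⟫_ℂ := by
  have hzz : conj z * z = 1 := by
    rw [RCLike.conj_mul, hz]; norm_num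
  simp only [phaseMap_apply, inner_add_left, inner_add_right, inner_smul_left,
    inner_smul_right, inner_self_eq_norm_sq_to_K, ha, map_mul, map_sub, map_one,
    inner_conj_symm]
  linear_combination (⟪u, a⟫_ℂ * ⟪a, v⟫_ℂ) * hzz

variable [FiniteDimensional ℂ E]

def phaseIsometry (ha : ‖a‖ = 1) {z : ℂ} (hz : ‖z‖ = 1) : E ≃ₗᵢ[ℂ] E :=
  ((phaseMap a z).isometryOfInner (inner_phaseMap_phaseMap ha hz)).toLinearIsometryEquiv rfl

lemma phaseIsometry_apply (ha : ‖a‖ = 1) {z : ℂ} (hz : ‖z‖ = 1) (u : E) :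
    phaseIsometry ha hz u = phaseMap a z u := rfl

lemma exists_orthonormalBasis_apply_eq_s3 (ha : ‖a‖ = 1) (i : Fin (Module.finrank ℂ E)) :
    ∃ B : OrthonormalBasis (Fin (Module.finrank ℂ E)) ℂ E, B i = a := by
  have hsingle : Orthonormal ℂ (({i} : Set _).domRestrict fun _ ↦ a) := by
    rw [orthonormal_iff_ite]
    rintro ⟨j, rfl⟩ ⟨j', rfl⟩
    simp [Set.domRestrict, inner_self_eq_norm_sq_to_K, ha]
  obtain ⟨B, hB⟩ := hsingle.exists_orthonormalBasis_extension_of_card_eq (by simp)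
  exact ⟨B, hB i rfl⟩

lemma exists_linearIsometryEquiv_apply_eq_s3 {b : E} (ha : ‖a‖ = 1) (hb : ‖b‖ = 1) :
    ∃ e : E ≃ₗᵢ[ℂ] E, e a = b := by
  have : Nontrivial E := nontrivial_of_ne a 0 (norm_ne_zero_iff.mp (by simp [ha]))
  let i : Fin (Module.finrank ℂ E) := ⟨0, Module.finrank_pos⟩
  obtain ⟨A, hA⟩ := exists_orthonormalBasis_apply_eq_s3 ha i
  obtain ⟨B, hB⟩ := exists_orthonormalBasis_apply_eq_s3 hb i
  exact ⟨A.repr.trans B.repr.symm, by simp [← hA, ← hB]⟩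

end Unitary

section Sphere

open Finset

variable {d : ℕ} {μ : Measure (USphere d)}

lemma integral_comp_sphereRot (hμ : IsUniformOnSphere d μ) (e : Cvec d ≃ₗᵢ[ℂ] Cvec d)
    {E : Type*} [NormedAddCommGroup E] [NormedSpace ℝ E] {g : USphere d → E}
    (hg : AEStronglyMeasurable g μ) : ∫ u, g (sphereRot d e u) ∂μ = ∫ u, g u ∂μ := by
  have hrot : Measurable (sphereRot d e) :=
    (e.continuous.comp continuous_subtype_val).subtype_mk _ |>.measurable
  rw [← integral_map hrot.aemeasurable (by rwa [hμ.2 e]), hμ.2 e]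

/-- The phase unitary along `a` multiplies the integrand by `-1`. -/
lemma integral_inner_pow_mul_conj_pow_eq_zero (hμ : IsUniformOnSphere d μ) {a b : Cvec d}
    (ha : ‖a‖ = 1) (hba : ⟪b, a⟫_ℂ = 0) {h : ℂ → ℂ} (hh : Continuous h) {p q : ℕ}
    (hpq : p ≠ q) :
    ∫ u, ⟪a, u⟫_ℂ ^ p * conj ⟪a, u⟫_ℂ ^ q * h ⟪b, u⟫_ℂ ∂μ = 0 := by
  obtain ⟨z, hz, hzpq⟩ := exists_norm_eq_one_pow_mul_conj_pow_eq_neg_one hpq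
  set g : USphere d → ℂ := fun u ↦ ⟪a, u⟫_ℂ ^ p * conj ⟪a, u⟫_ℂ ^ q * h ⟪b, u⟫_ℂ
  have hg : Continuous g := by fun_prop
  have hrot : ∀ u, g (sphereRot d (phaseIsometry ha hz) u) = -g u := by
    intro u
    simp only [g, sphereRot, phaseIsometry_apply, inner_phaseMap_right_self ha,
      inner_phaseMap_right_of_inner_eq_zero hba, map_mul, mul_pow]
    linear_combination g u * hzpq
  have := integral_comp_sphereRot hμ (phaseIsometry ha hz) hg.aestronglyMeasurable
  simp only [hrot, integral_neg] at this
  linear_combination -this / 2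

def sphereMoment (μ : Measure (USphere d)) (a : Cvec d) (n : ℕ) : ℝ :=
  ∫ u, ‖⟪a, u⟫_ℂ‖ ^ (2 * n) ∂μ

def sphereMixedMoment (μ : Measure (USphere d)) (a b : Cvec d) (p q : ℕ) : ℝ :=
  ∫ u, ‖⟪a, u⟫_ℂ‖ ^ (2 * p) * ‖⟪b, u⟫_ℂ‖ ^ (2 * q) ∂μ

lemma dim_pos_of_norm_eq_one {a : Cvec d} (ha : ‖a‖ = 1) : 0 < d := by
  rw [Nat.pos_iff_ne_zero]
  rintro rfl
  simp [Subsingleton.elim a 0] at ha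

lemma sphereMoment_zero (hμ : IsUniformOnSphere d μ) (a : Cvec d) : sphereMoment μ a 0 = 1 := by
  have := hμ.1
  simp [sphereMoment]

lemma sphereMoment_eq_of_norm_eq_one (hμ : IsUniformOnSphere d μ) {a b : Cvec d}
    (ha : ‖a‖ = 1) (hb : ‖b‖ = 1) (n : ℕ) : sphereMoment μ a n = sphereMoment μ b n := by
  obtain ⟨e, rfl⟩ := exists_linearIsometryEquiv_apply_eq_s3 hb ha
  rw [sphereMoment, ← integral_comp_sphereRot hμ e (by fun_prop)]
  simp [sphereMoment, sphereRot]

lemma sphereMoment_smul (c : ℂ) (a : Cvec d) (n : ℕ) :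
    sphereMoment μ (c • a) n = ‖c‖ ^ (2 * n) * sphereMoment μ a n := by
  simp only [sphereMoment, inner_smul_left, norm_mul, RCLike.norm_conj, mul_pow,
    integral_const_mul]

lemma sphereMixedMoment_smul_right (a : Cvec d) (c : ℂ) (b : Cvec d) (p q : ℕ) :
    sphereMixedMoment μ a (c • b) p q = ‖c‖ ^ (2 * q) * sphereMixedMoment μ a b p q := by
  simp only [sphereMixedMoment, inner_smul_left, norm_mul, RCLike.norm_conj, mul_pow,
    ← integral_const_mul]
  congr 1 with u
  ring

lemma sphereMoment_eq_norm_pow_mul (hμ : IsUniformOnSphere d μ) {a x : Cvec d} (ha : ‖a‖ = 1)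
    (hx : x ≠ 0) (n : ℕ) : sphereMoment μ x n = ‖x‖ ^ (2 * n) * sphereMoment μ a n := by
  obtain ⟨y, hy, hxy⟩ := exists_norm_eq_one_smul_eq hx
  conv_lhs => rw [hxy]
  rw [sphereMoment_smul, sphereMoment_eq_of_norm_eq_one hμ hy ha, Complex.norm_real, norm_norm]

lemma integral_inner_pow_mul_conj_pow_eq_sphereMixedMoment (a b : Cvec d) (p q : ℕ) :
    ∫ u, ⟪a, u⟫_ℂ ^ p * conj ⟪a, u⟫_ℂ ^ p * (⟪b, u⟫_ℂ ^ q * conj ⟪b, u⟫_ℂ ^ q) ∂μ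
      = sphereMixedMoment μ a b p q := by
  simp only [sphereMixedMoment, ← integral_complex_ofReal, Complex.ofReal_mul,
    Complex.ofReal_norm_pow_two_mul, mul_pow]

lemma sphereMoment_smul_add (hμ : IsUniformOnSphere d μ) {a b : Cvec d} (ha : ‖a‖ = 1)
    (hab : ⟪a, b⟫_ℂ = 0) (t : ℝ) (n : ℕ) :
    sphereMoment μ ((t : ℂ) • a + b) n
      = ∑ j ∈ range (n + 1),
          (n.choose j : ℝ) ^ 2 * t ^ (2 * j) * sphereMixedMoment μ a b j (n - j) := by
  have := hμ.1
  have hba : ⟪b, a⟫_ℂ = 0 := by rw [← inner_conj_symm, hab, map_zero]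
  apply Complex.ofReal_injective
  simp only [sphereMoment, ← integral_complex_ofReal, inner_add_left, inner_smul_left,
    Complex.conj_ofReal, Complex.ofReal_norm_mul_add_pow_two_mul]
  rw [integral_finsetSum _ fun p _ ↦ integrable_finsetSum _ fun q _ ↦
    Continuous.integrable_of_compactSpace (by fun_prop)]
  push_cast
  refine sum_congr rfl fun p hp ↦ ?_
  rw [integral_finsetSum _ fun q _ ↦ Continuous.integrable_of_compactSpace (by fun_prop),
    sum_eq_single_of_mem p hp]
  · rw [integral_const_mul, integral_inner_pow_mul_conj_pow_eq_sphereMixedMoment]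
    ring
  · intro q _ hqp
    rw [integral_const_mul, integral_inner_pow_mul_conj_pow_eq_zero hμ ha hba
      (h := fun y ↦ y ^ (n - p) * conj y ^ (n - q)) (by fun_prop) hqp.symm, mul_zero]

lemma choose_mul_sphereMixedMoment (hμ : IsUniformOnSphere d μ) {a b : Cvec d} (ha : ‖a‖ = 1)
    (hb : ‖b‖ = 1) (hab : ⟪a, b⟫_ℂ = 0) {j n : ℕ} (hj : j ≤ n) :
    n.choose j * sphereMixedMoment μ a b j (n - j) = sphereMoment μ a n := by
  have hpoly := eq_mul_choose_of_sum_mul_pow_eq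
    (c := fun i ↦ (n.choose i : ℝ) ^ 2 * sphereMixedMoment μ a b i (n - i))
    (m := sphereMoment μ a n) (fun x hx ↦ ?_) hj
  · have hC : (n.choose j : ℝ) ≠ 0 := by exact_mod_cast (Nat.choose_pos hj).ne'
    exact mul_left_cancel₀ hC (by linear_combination hpoly)
  · set t := √x
    have hnorm : ‖(t : ℂ) • a + b‖ ^ 2 = x + 1 := by
      rw [sq, norm_add_sq_eq_norm_sq_add_norm_sq_of_inner_eq_zero _ _
        (by rw [inner_smul_left, hab, mul_zero]), norm_smul, Complex.norm_real, Real.norm_eq_abs,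
        abs_of_nonneg (Real.sqrt_nonneg x), ha, hb, mul_one, mul_one, Real.mul_self_sqrt hx]
    have hne : (t : ℂ) • a + b ≠ 0 := by
      intro h
      rw [h, norm_zero] at hnorm
      linarith
    have := sphereMoment_smul_add hμ ha hab t n
    rw [sphereMoment_eq_norm_pow_mul hμ ha hne, pow_mul, hnorm] at this
    rw [mul_comm, this]
    refine sum_congr rfl fun i _ ↦ ?_
    rw [pow_mul, Real.sq_sqrt hx]
    ring

lemma succ_mul_integral_norm_inner_sq_mul_of_inner_eq_zero (hμ : IsUniformOnSphere d μ)
    {a w : Cvec d} (ha : ‖a‖ = 1) (haw : ⟪a, w⟫_ℂ = 0) (k : ℕ) :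
    (k + 1) * ∫ u, ‖⟪w, u⟫_ℂ‖ ^ 2 * ‖⟪a, u⟫_ℂ‖ ^ (2 * k) ∂μ
      = ‖w‖ ^ 2 * sphereMoment μ a (k + 1) := by
  rcases eq_or_ne w 0 with rfl | hw
  · simp
  obtain ⟨y, hy, hwy⟩ := exists_norm_eq_one_smul_eq hw
  have hay : ⟪a, y⟫_ℂ = 0 := by
    rwa [hwy, inner_smul_right, mul_eq_zero,
      or_iff_right (by exact_mod_cast norm_ne_zero_iff.mpr hw)] at haw
  have hmixed : sphereMixedMoment μ a w k 1 = ‖w‖ ^ 2 * sphereMixedMoment μ a y k 1 := by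
    conv_lhs => rw [hwy]
    rw [sphereMixedMoment_smul_right, Complex.norm_real, norm_norm]
  have h := choose_mul_sphereMixedMoment hμ ha hy hay (Nat.le_add_right k 1)
  rw [Nat.add_sub_cancel_left, Nat.choose_succ_self_right] at h
  have hJ : ∫ u, ‖⟪w, u⟫_ℂ‖ ^ 2 * ‖⟪a, u⟫_ℂ‖ ^ (2 * k) ∂μ = sphereMixedMoment μ a w k 1 := by
    simp_rw [sphereMixedMoment, mul_comm (‖⟪w, _⟫_ℂ‖ ^ 2)]
  rw [hJ, hmixed, ← h]
  push_cast
  ring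

lemma integral_norm_mul_inner_add_inner_sq_mul (hμ : IsUniformOnSphere d μ) {a w : Cvec d}
    (ha : ‖a‖ = 1) (haw : ⟪a, w⟫_ℂ = 0) (c : ℂ) (k : ℕ) :
    ∫ u, ‖c * ⟪a, u⟫_ℂ + ⟪w, u⟫_ℂ‖ ^ 2 * ‖⟪a, u⟫_ℂ‖ ^ (2 * k) ∂μ
      = ‖c‖ ^ 2 * sphereMoment μ a (k + 1) + ∫ u, ‖⟪w, u⟫_ℂ‖ ^ 2 * ‖⟪a, u⟫_ℂ‖ ^ (2 * k) ∂μ := by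
  have := hμ.1
  have hwa : ⟪w, a⟫_ℂ = 0 := by rw [← inner_conj_symm, haw, map_zero]
  apply Complex.ofReal_injective
  simp only [← integral_complex_ofReal, Complex.ofReal_norm_mul_add_sq_mul_norm_pow]
  have hint {g : USphere d → ℂ} (hg : Continuous g) : Integrable g μ :=
    hg.integrable_of_compactSpace
  rw [integral_add (hint (by fun_prop)) (hint (by fun_prop)),
    integral_add (hint (by fun_prop)) (hint (by fun_prop)), integral_const_mul, integral_const_mul,
    integral_inner_pow_mul_conj_pow_eq_zero hμ ha hwa (h := conj) (by fun_prop) (by omega),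
    integral_inner_pow_mul_conj_pow_eq_zero hμ ha hwa (h := fun y ↦ y) (by fun_prop) (by omega),
    integral_complex_ofReal, integral_add (Continuous.integrable_of_compactSpace (by fun_prop))
      (Continuous.integrable_of_compactSpace (by fun_prop)), integral_const_mul]
  simp [sphereMoment]

lemma succ_mul_integral_norm_inner_sq_mul (hμ : IsUniformOnSphere d μ) {a b : Cvec d}
    (ha : ‖a‖ = 1) (hb : ‖b‖ = 1) (k : ℕ) :
    (k + 1) * ∫ u, ‖⟪b, u⟫_ℂ‖ ^ 2 * ‖⟪a, u⟫_ℂ‖ ^ (2 * k) ∂μ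
      = sphereMoment μ a (k + 1) * (1 + k * ‖⟪a, b⟫_ℂ‖ ^ 2) := by
  set β := ⟪a, b⟫_ℂ
  set w := b - β • a
  have haw : ⟪a, w⟫_ℂ = 0 := by
    simp [w, β, inner_self_eq_norm_sq_to_K, ha]
  have hinner (u : USphere d) : ⟪b, u⟫_ℂ = conj β * ⟪a, u⟫_ℂ + ⟪w, u⟫_ℂ := by
    simp only [w, inner_sub_left, inner_smul_left]
    ring
  have hpyth : ‖β‖ ^ 2 + ‖w‖ ^ 2 = 1 := by
    have := norm_add_sq_eq_norm_sq_add_norm_sq_of_inner_eq_zero (β • a) w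
      (by rw [inner_smul_left, haw, mul_zero])
    rw [show β • a + w = b by simp [w], hb, norm_smul, ha] at this
    linear_combination -this
  have hw := succ_mul_integral_norm_inner_sq_mul_of_inner_eq_zero hμ ha haw k
  simp_rw [hinner, integral_norm_mul_inner_add_inner_sq_mul hμ ha haw, RCLike.norm_conj]
  linear_combination hw + sphereMoment μ a (k + 1) * hpyth

lemma succ_mul_sphereMoment (hμ : IsUniformOnSphere d μ) {a : Cvec d} (ha : ‖a‖ = 1) (n : ℕ) :
    (n + 1) * sphereMoment μ a n = (d + n) * sphereMoment μ a (n + 1) := by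
  have := hμ.1
  let e := EuclideanSpace.basisFun (Fin d) ℂ
  have hparseval (x : Cvec d) : ∑ i, ‖⟪e i, x⟫_ℂ‖ ^ 2 = ‖x‖ ^ 2 := by
    simp [e, EuclideanSpace.inner_single_left, EuclideanSpace.norm_sq_eq]
  have hsplit : sphereMoment μ a n = ∑ i, ∫ u, ‖⟪e i, u⟫_ℂ‖ ^ 2 * ‖⟪a, u⟫_ℂ‖ ^ (2 * n) ∂μ := by
    rw [← integral_finsetSum _ fun i _ ↦ Continuous.integrable_of_compactSpace (by fun_prop)]
    simp_rw [← sum_mul, hparseval, mem_sphere_zero_iff_norm.mp (Subtype.prop _), one_pow,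
      one_mul, sphereMoment]
  calc (n + 1) * sphereMoment μ a n
      = ∑ i, sphereMoment μ a (n + 1) * (1 + n * ‖⟪a, e i⟫_ℂ‖ ^ 2) := by
        rw [hsplit, mul_sum]
        exact sum_congr rfl fun i _ ↦
          succ_mul_integral_norm_inner_sq_mul hμ ha (e.orthonormal.1 i) n
    _ = (d + n) * sphereMoment μ a (n + 1) := by
        simp_rw [norm_inner_symm a, ← mul_sum, sum_add_distrib, ← mul_sum, hparseval, ha]
        simp
        ring

lemma choose_mul_sphereMoment (hμ : IsUniformOnSphere d μ) {a : Cvec d} (ha : ‖a‖ = 1) (n : ℕ) :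
    (d + n - 1).choose n * sphereMoment μ a n = 1 := by
  have hd := dim_pos_of_norm_eq_one ha
  induction n with
  | zero => simp [sphereMoment_zero hμ]
  | succ n ih =>
    have hchoose : ((d + n : ℕ) : ℝ) * (d + n - 1).choose n = (d + n).choose (n + 1) * (n + 1) := by
      have := Nat.add_one_mul_choose_eq (d + n - 1) n
      rw [Nat.sub_add_cancel (by omega)] at this
      exact_mod_cast this
    have hdn : (d : ℝ) + n ≠ 0 := by positivity
    rw [show d + (n + 1) - 1 = d + n by omega]
    apply mul_left_cancel₀ hdn
    push_cast at hchoose ⊢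
    linear_combination -((d + n).choose (n + 1) : ℝ) * succ_mul_sphereMoment hμ ha n
      - sphereMoment μ a n * hchoose + ((d : ℝ) + n) * ih

lemma sphereMoment_eq_inv_choose (hμ : IsUniformOnSphere d μ) {a : Cvec d} (ha : ‖a‖ = 1)
    (n : ℕ) : sphereMoment μ a n = ((d + n - 1).choose n : ℝ)⁻¹ :=
  eq_inv_of_mul_eq_one_right (choose_mul_sphereMoment hμ ha n)

lemma integral_norm_inner_sq_mul_norm_inner_pow (hμ : IsUniformOnSphere d μ) {a b : Cvec d}
    (ha : ‖a‖ = 1) (hb : ‖b‖ = 1) (k : ℕ) :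
    ∫ u, ‖⟪b, u⟫_ℂ‖ ^ 2 * ‖⟪a, u⟫_ℂ‖ ^ (2 * k) ∂μ
      = (1 + k * ‖⟪a, b⟫_ℂ‖ ^ 2) / ((d + k) * (d + k - 1).choose k) := by
  have hd := dim_pos_of_norm_eq_one ha
  have hC : ((d + k - 1).choose k : ℝ) ≠ 0 := Nat.cast_ne_zero.mpr (Nat.choose_pos (by omega)).ne'
  rw [eq_div_iff (mul_ne_zero (by positivity) hC)]
  apply mul_left_cancel₀ (by positivity : (k : ℝ) + 1 ≠ 0)
  linear_combination
    ((d : ℝ) + k) * (d + k - 1).choose k * succ_mul_integral_norm_inner_sq_mul hμ ha hb k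
    - (d + k - 1).choose k * (1 + k * ‖⟪a, b⟫_ℂ‖ ^ 2) * succ_mul_sphereMoment hμ ha k
    + (k + 1) * (1 + k * ‖⟪a, b⟫_ℂ‖ ^ 2) * choose_mul_sphereMoment hμ ha k

end Sphere

theorem stmt3_general (d k : ℕ)
    (μ : Measure (USphere d)) (hμ : IsUniformOnSphere d μ)
    (φ ψ : Cvec d) (hφ : ‖φ‖ = 1) (hψ : ‖ψ‖ = 1) :
    (Nat.choose (d + k - 1) k : ℝ) ^ 2 *
      ∫ u : USphere d, ∫ v : USphere d,
        ‖(inner ℂ (u : Cvec d) (v : Cvec d) : ℂ)‖ ^ 2 *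
          ‖(inner ℂ φ (u : Cvec d) : ℂ)‖ ^ (2 * k) *
          ‖(inner ℂ ψ (v : Cvec d) : ℂ)‖ ^ (2 * k) ∂μ ∂μ
      = ((d : ℝ) + 2 * k) / ((d : ℝ) + k) ^ 2
        + ((k : ℝ) ^ 2 / ((d : ℝ) + k) ^ 2) * ‖(inner ℂ φ ψ : ℂ)‖ ^ 2 := by
  have := hμ.1
  have hd := dim_pos_of_norm_eq_one hφ
  have hinner (u : USphere d) :
      ∫ v, ‖⟪(u : Cvec d), v⟫_ℂ‖ ^ 2 * ‖⟪φ, u⟫_ℂ‖ ^ (2 * k) * ‖⟪ψ, v⟫_ℂ‖ ^ (2 * k) ∂μ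
        = (‖⟪φ, u⟫_ℂ‖ ^ (2 * k) + k * (‖⟪ψ, u⟫_ℂ‖ ^ 2 * ‖⟪φ, u⟫_ℂ‖ ^ (2 * k)))
          / ((d + k) * (d + k - 1).choose k) := by
    simp_rw [mul_right_comm _ (‖⟪φ, (u : Cvec d)⟫_ℂ‖ ^ (2 * k)), integral_mul_const,
      integral_norm_inner_sq_mul_norm_inner_pow hμ hψ (mem_sphere_zero_iff_norm.mp u.2)]
    ring
  simp_rw [hinner]
  rw [integral_div, integral_add (Continuous.integrable_of_compactSpace (by fun_prop))
    (Continuous.integrable_of_compactSpace (by fun_prop)), integral_const_mul,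
    integral_norm_inner_sq_mul_norm_inner_pow hμ hφ hψ]
  change _ * ((sphereMoment μ φ k + _) / _) = _
  have hC : ((d + k - 1).choose k : ℝ) ≠ 0 := Nat.cast_ne_zero.mpr (Nat.choose_pos (by omega)).ne'
  rw [sphereMoment_eq_inv_choose hμ hφ]
  field_simp
  ring

/-- Unbiasedness of the multi-copy estimator: with `f = |⟨φ,ψ⟩|²` and
`C = C(d+k-1,k)`,
`C² ∬ |⟨u,v⟩|² |⟨φ,u⟩|^{2k} |⟨ψ,v⟩|^{2k} dμ(u) dμ(v) = (d+2k)/(d+k)² + (k²/(d+k)²)·f`. -/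
theorem stmt3 (d k : ℕ) (hd : 1 ≤ d) (hk : 1 ≤ k)
    (μ : Measure (USphere d)) (hμ : IsUniformOnSphere d μ)
    (φ ψ : Cvec d) (hφ : ‖φ‖ = 1) (hψ : ‖ψ‖ = 1) :
    (Nat.choose (d + k - 1) k : ℝ) ^ 2 *
      ∫ u : USphere d, ∫ v : USphere d,
        ‖(inner ℂ (u : Cvec d) (v : Cvec d) : ℂ)‖ ^ 2 *
          ‖(inner ℂ φ (u : Cvec d) : ℂ)‖ ^ (2 * k) *
          ‖(inner ℂ ψ (v : Cvec d) : ℂ)‖ ^ (2 * k) ∂μ ∂μ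
      = ((d : ℝ) + 2 * k) / ((d : ℝ) + k) ^ 2
        + ((k : ℝ) ^ 2 / ((d : ℝ) + k) ^ 2) * ‖(inner ℂ φ ψ : ℂ)‖ ^ 2 :=
  stmt3_general d k μ hμ φ ψ hφ hψ

end
end
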